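/- arXiv:1402.5761 — 3 statements merged into one kernel-verified Lean document; each statement's English description precedes it below -/
import Mathlib

section
/- Let q be a ℂ-dual quaternion. Then (I·1 + 𝐢)·q = 0 and q·(I·1 − 𝐢) = 0 both hold if and only if there exist complex numbers a, b such that q = (a·1 + b·ε)·(𝐣 + I·𝐤). In other words, the simultaneous solutions of these two equations are exactly the dual-complex scalar multiples of 𝐣 + I·𝐤. -/
open Quaternion TrivSqZeroExt DualNumber

noncomputable section

/-- The ℂ-dual quaternions. -/
abbrev DQ : Type := DualNumber (Quaternion ℂ)

/-- The quaternion unit 𝐢, viewed as a dual quaternion. -/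
def qi : DQ := inl (⟨0,1,0,0⟩ : ℍ[ℂ])
/-- The quaternion unit 𝐣, viewed as a dual quaternion. -/
def qj : DQ := inl (⟨0,0,1,0⟩ : ℍ[ℂ])
/-- The quaternion unit 𝐤, viewed as a dual quaternion. -/
def qk : DQ := inl (⟨0,0,0,1⟩ : ℍ[ℂ])

/-- A complex scalar, viewed as a dual quaternion. -/
def cs (a : ℂ) : DQ := inl (algebraMap ℂ ℍ[ℂ] a)

/-!
The coefficients `I + 𝐢` and `I - 𝐢` have no `ε`-part, so both bond equations split into the
same pair of quaternion equations `(I + 𝐢) p = 0`, `p (I - 𝐢) = 0` for the primal and the dual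
part `p` of `q`. In coordinates the first gives `p₁ = I p₀`, `p₃ = I p₂` and the second
`p₁ = -I p₀`, so `p₀ = p₁ = 0` and `p = p₂ (𝐣 + I 𝐤)`.
-/

namespace DualNumber

variable {R : Type*} [Semiring R] {x : R[ε]}

theorem mul_eq_zero_iff_of_snd_eq_zero_left (hx : snd x = 0) (y : R[ε]) :
    x * y = 0 ↔ fst x * fst y = 0 ∧ fst x * snd y = 0 := by
  simp [TrivSqZeroExt.ext_iff, hx]

theorem mul_eq_zero_iff_of_snd_eq_zero_right (hx : snd x = 0) (y : R[ε]) :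
    y * x = 0 ↔ fst y * fst x = 0 ∧ snd y * fst x = 0 := by
  simp [TrivSqZeroExt.ext_iff, hx]

end DualNumber

@[simp] theorem fst_cs (a : ℂ) : fst (cs a) = a := rfl
@[simp] theorem snd_cs (a : ℂ) : snd (cs a) = 0 := rfl
@[simp] theorem snd_qi : snd qi = 0 := rfl
@[simp] theorem snd_qj : snd qj = 0 := rfl
@[simp] theorem snd_qk : snd qk = 0 := rfl
-- Quaternion literals `⟨_, _, _, _⟩ : ℍ[ℂ]` elaborate at type `ℍ[ℂ,-1,0,-1]`, on which the
-- `Quaternion` simp lemmas do not fire, so the units are only ever read through these lemmas.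
@[simp] theorem re_fst_qi : (fst qi).re = 0 := rfl
@[simp] theorem imI_fst_qi : (fst qi).imI = 1 := rfl
@[simp] theorem imJ_fst_qi : (fst qi).imJ = 0 := rfl
@[simp] theorem imK_fst_qi : (fst qi).imK = 0 := rfl
@[simp] theorem re_fst_qj : (fst qj).re = 0 := rfl
@[simp] theorem imI_fst_qj : (fst qj).imI = 0 := rfl
@[simp] theorem imJ_fst_qj : (fst qj).imJ = 1 := rfl
@[simp] theorem imK_fst_qj : (fst qj).imK = 0 := rfl
@[simp] theorem re_fst_qk : (fst qk).re = 0 := rfl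
@[simp] theorem imI_fst_qk : (fst qk).imI = 0 := rfl
@[simp] theorem imJ_fst_qk : (fst qk).imJ = 0 := rfl
@[simp] theorem imK_fst_qk : (fst qk).imK = 1 := rfl

theorem fst_cs_add_cs_mul_eps_mul (a b : ℂ) (x : DQ) :
    fst ((cs a + cs b * ε) * x) = a • fst x := by
  simp [Quaternion.coe_mul_eq_smul]

theorem snd_cs_add_cs_mul_eps_mul (a b : ℂ) (x : DQ) :
    snd ((cs a + cs b * ε) * x) = a • snd x + b • fst x := by
  simp [Quaternion.coe_mul_eq_smul]

open Complex Quaternion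

theorem eq_smul_fst_qj_add_I_qk_iff (p : ℍ[ℂ]) :
    (∃ a : ℂ, p = a • fst (qj + cs I * qk)) ↔ p.re = 0 ∧ p.imI = 0 ∧ p.imK = I * p.imJ := by
  simp [Quaternion.ext_iff, mul_comm I]

theorem fst_bond_equations_iff (p : ℍ[ℂ]) :
    (fst (cs I + qi) * p = 0 ∧ p * fst (cs I - qi) = 0) ↔
      p.re = 0 ∧ p.imI = 0 ∧ p.imK = I * p.imJ := by
  simp only [Quaternion.ext_iff, fst_add, fst_sub, fst_cs, re_mul, imI_mul, imJ_mul, imK_mul,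
    re_add, imI_add, imJ_add, imK_add, re_sub, imI_sub, imJ_sub, imK_sub, re_coe, imI_coe,
    imJ_coe, imK_coe, re_fst_qi, imI_fst_qi, imJ_fst_qi, imK_fst_qi, re_zero, imI_zero, imJ_zero,
    imK_zero]
  constructor
  · rintro ⟨⟨h₀, -, h₂, -⟩, k₀, -⟩
    refine ⟨?_, ?_, ?_⟩
    · linear_combination (-I / 2) * h₀ + (-I / 2) * k₀ + p.re * I_sq
    · linear_combination (1 / 2 : ℂ) * k₀ - (1 / 2 : ℂ) * h₀
    · linear_combination -h₂
  · rintro ⟨h₀, h₁, h₃⟩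
    simp only [h₀, h₁, h₃]
    ring_nf
    simp [I_sq]

/-- The simultaneous solutions of `(I + 𝐢)q = 0` and `q(I - 𝐢) = 0` are exactly the
dual-complex scalar multiples of `𝐣 + I𝐤`. -/
theorem solutions_of_bond_equations (q : DQ) :
    ((cs Complex.I + qi) * q = 0 ∧ q * (cs Complex.I - qi) = 0) ↔
      ∃ a b : ℂ, q = (cs a + cs b * ε) * (qj + cs Complex.I * qk) := by
  have hl : snd (cs I + qi) = 0 := by simp
  have hr : snd (cs I - qi) = 0 := by simp
  have hw : snd (qj + cs I * qk) = 0 := by simp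
  rw [DualNumber.mul_eq_zero_iff_of_snd_eq_zero_left hl,
    DualNumber.mul_eq_zero_iff_of_snd_eq_zero_right hr, and_and_and_comm,
    fst_bond_equations_iff, fst_bond_equations_iff, ← eq_smul_fst_qj_add_I_qk_iff,
    ← eq_smul_fst_qj_add_I_qk_iff, exists_and_exists_comm]
  simp only [TrivSqZeroExt.ext_iff, fst_cs_add_cs_mul_eps_mul, snd_cs_add_cs_mul_eps_mul, hw,
    smul_zero, zero_add]
end
end

section
/- Let q₁, …, qₙ be real dual quaternions such that for each m the norm qₘ·conj(qₘ) is a real scalar (a real multiple of 1), where conj denotes quaternion conjugation applied to both the primal and the dual part. If the product q₁·q₂⋯qₙ equals a·1 + b·ε for real numbers a, b with a ≠ 0, then b = 0. -/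
/-
Quaternion conjugation reverses products and real scalars are central, so the dual quaternions
whose norm is a real scalar form a monoid, and the product `P = a + bε` has real norm. But
`P` is its own conjugate and `P · conj P = a² + 2ab ε`, so `2ab = 0`.
-/

open Quaternion TrivSqZeroExt DualNumber

noncomputable section

/-- The real dual quaternions. -/
abbrev DQR : Type := DualNumber (Quaternion ℝ)

/-- A real scalar, viewed as a dual quaternion. -/
def rs (r : ℝ) : DQR := inl (algebraMap ℝ ℍ[ℝ] r)

/-- Quaternion conjugation of a dual quaternion, applied to both
the primal and dual part. -/
def dconj (q : DQR) : DQR := inl (star (fst q)) + inr (star (snd q))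

@[simp] lemma fst_dconj (q : DQR) : fst (dconj q) = star (fst q) := by simp [dconj]
@[simp] lemma snd_dconj (q : DQR) : snd (dconj q) = star (snd q) := by simp [dconj]

lemma dconj_mul (x y : DQR) : dconj (x * y) = dconj y * dconj x := by
  ext : 1
  · simp
  · simp [add_comm]

lemma rs_eq_algebraMap (r : ℝ) : rs r = algebraMap ℝ DQR r :=
  (algebraMap_eq_inl' ..).symm

lemma rs_mul_comm (r : ℝ) (x : DQR) : rs r * x = x * rs r := by
  rw [rs_eq_algebraMap]
  exact Algebra.commutes r x

lemma rs_mul_rs (r s : ℝ) : rs r * rs s = rs (r * s) := by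
  simp only [rs_eq_algebraMap, map_mul]

lemma mul_mul_dconj_mul {x y : DQR} {r s : ℝ} (hx : x * dconj x = rs r)
    (hy : y * dconj y = rs s) : x * y * dconj (x * y) = rs (r * s) :=
  calc x * y * dconj (x * y) = x * (y * dconj y) * dconj x := by
        rw [dconj_mul]; noncomm_ring
    _ = rs s * (x * dconj x) := by rw [hy, ← rs_mul_comm, mul_assoc]
    _ = rs (r * s) := by rw [hx, rs_mul_rs, mul_comm]

def realNormSubmonoid : Submonoid DQR where
  carrier := {x | ∃ r : ℝ, x * dconj x = rs r}
  one_mem' := ⟨1, by ext : 1 <;> simp [rs]⟩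
  mul_mem' := fun ⟨r, hx⟩ ⟨s, hy⟩ => ⟨r * s, mul_mul_dconj_mul hx hy⟩

lemma rs_add_rs_mul_eps_mul_dconj (a b : ℝ) :
    (rs a + rs b * ε) * dconj (rs a + rs b * ε) = rs (a * a) + rs (2 * a * b) * ε := by
  ext : 1
  · simp [rs]
  · simpa [rs, ← coe_mul, ← coe_add] using (by ring : a * b + b * a = 2 * a * b)

/-- If each factor has real norm `qₘ · conj(qₘ)` and the product equals `a + bε`
with `a ≠ 0` real, then `b = 0`. -/
theorem dual_part_of_real_norm_product (n : ℕ) (q : Fin n → DQR)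
    (hnorm : ∀ m : Fin n, ∃ r : ℝ, q m * dconj (q m) = rs r)
    (a b : ℝ) (ha : a ≠ 0)
    (hprod : (List.ofFn q).prod = rs a + rs b * ε) :
    b = 0 := by
  have hmem : (List.ofFn q).prod ∈ realNormSubmonoid :=
    Submonoid.list_prod_mem _ fun x hx => by
      obtain ⟨m, rfl⟩ := List.mem_ofFn.mp hx
      exact hnorm m
  obtain ⟨r, hr⟩ := hmem
  rw [hprod, rs_add_rs_mul_eps_mul_dconj] at hr
  have h2ab : 2 * a * b = 0 :=
    coe_injective (by simpa [rs] using congrArg snd hr)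
  simpa [ha] using h2ab
end
end

section
/- Let s₁, s₂, w₁, w₂, d₁, d₂ be real numbers with w₁ ≠ 0 and w₂ ≠ 0, and set gᵢ = (1 − (sᵢ/2)·ε𝐢)·(wᵢ·1 − 𝐤)·(1 − (dᵢ/2)·ε𝐤) for i = 1, 2, regarded as ℂ-dual quaternions. Suppose t₁, t₃ ∈ {I, −I}, t₂ ∈ ℂ with t₂ ≠ I and t₂ ≠ −I, and (t₁·1 − 𝐢)·g₁·(t₂·1 − 𝐢)·g₂·(t₃·1 − 𝐢) = 0. Then the Bennett conditions hold: s₂ = 0 and b₁ = ±b₂, where bᵢ = dᵢ·(wᵢ² + 1)/(2wᵢ). -/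
open Quaternion TrivSqZeroExt DualNumber

noncomputable section

/-- The joint dual quaternion `g = (1 - (s/2)ε𝐢)(w - 𝐤)(1 - (d/2)ε𝐤)`,
regarded as a ℂ-dual quaternion. -/
def g (s w d : ℝ) : DQ :=
  (1 - cs (s/2) * ε * qi) * (cs w - qk) * (1 - cs (d/2) * ε * qk)

/-
For `τ² = -1` the factor `τ - 𝐢` is `τ` times an idempotent, and sandwiching a quaternion `x`
between two such factors only sees two of its coordinates: `(τ - 𝐢) x (τ - 𝐢)` is a multiple of
`x.re - τ x.imI`, and `(τ - 𝐢) x (-τ - 𝐢)` one of `x.imJ - τ x.imK`. The bond therefore yields two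
equations, linear in `t₂`, from the primal and the dual part of `g₁ (t₂ - 𝐢) g₂`. Eliminating `t₂`
leaves `2 s₂ w₁ w₂ + t₁ (w₂ d₁ (w₁² + 1) ± w₁ d₂ (w₂² + 1)) = 0` with real coefficients, and its
real and imaginary parts are the Bennett conditions.
-/

section Sandwich

variable {R : Type*} [CommRing R]

/- The anonymous constructor alone would be typed `QuaternionAlgebra R (-1) 0 (-1)`, on which
the `Quaternion` simp lemmas do not fire. -/
def quat (a b c d : R) : ℍ[R] := ⟨a, b, c, d⟩

@[simp] theorem quat_re (a b c d : R) : (quat a b c d).re = a := rfl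
@[simp] theorem quat_imI (a b c d : R) : (quat a b c d).imI = b := rfl
@[simp] theorem quat_imJ (a b c d : R) : (quat a b c d).imJ = c := rfl
@[simp] theorem quat_imK (a b c d : R) : (quat a b c d).imK = d := rfl

local notation "𝐢" => quat (0 : R) 1 0 0
local notation "𝐣" => quat (0 : R) 0 1 0

variable {τ : R}

theorem sandwich_same_sign (hτ : τ ^ 2 = -1) (x : ℍ[R]) :
    (τ - 𝐢) * x * (τ - 𝐢) = ((2 * τ * (x.re - τ * x.imI) : R) : ℍ[R]) * (τ - 𝐢) := by
  ext <;> simp only [re_mul, imI_mul, imJ_mul, imK_mul, re_sub, imI_sub, imJ_sub, imK_sub,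
    re_coe, imI_coe, imJ_coe, imK_coe, quat_re, quat_imI, quat_imJ, quat_imK]
  · linear_combination (2 * τ * x.imI - x.re) * hτ
  · linear_combination (-x.imI) * hτ
  · linear_combination x.imJ * hτ
  · linear_combination x.imK * hτ

theorem sandwich_opposite_sign (hτ : τ ^ 2 = -1) (x : ℍ[R]) :
    (τ - 𝐢) * x * (-τ - 𝐢) = ((-2 * τ * (x.imJ - τ * x.imK) : R) : ℍ[R]) * (τ - 𝐢) * 𝐣 := by
  ext <;> simp only [re_mul, imI_mul, imJ_mul, imK_mul, re_sub, imI_sub, imJ_sub, imK_sub,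
    re_neg, imI_neg, imJ_neg, imK_neg, re_coe, imI_coe, imJ_coe, imK_coe,
    quat_re, quat_imI, quat_imJ, quat_imK]
  · linear_combination (-x.re) * hτ
  · linear_combination (-x.imI) * hτ
  · linear_combination (x.imJ - 2 * τ * x.imK) * hτ
  · linear_combination x.imK * hτ

variable [IsDomain R] [NeZero (2 : R)]

theorem re_eq_of_sandwich_same_sign_eq_zero (hτ : τ ^ 2 = -1) {x : ℍ[R]}
    (h : (τ - 𝐢) * x * (τ - 𝐢) = 0) : x.re = τ * x.imI := by
  have h1 := congrArg QuaternionAlgebra.imI ((sandwich_same_sign hτ x).symm.trans h)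
  have hτ0 : τ ≠ 0 := by rintro rfl; simp at hτ
  simpa [two_ne_zero, hτ0, sub_eq_zero] using h1

theorem imJ_eq_of_sandwich_opposite_sign_eq_zero (hτ : τ ^ 2 = -1) {x : ℍ[R]}
    (h : (τ - 𝐢) * x * (-τ - 𝐢) = 0) : x.imJ = τ * x.imK := by
  have h1 := congrArg QuaternionAlgebra.imK ((sandwich_opposite_sign hτ x).symm.trans h)
  have hτ0 : τ ≠ 0 := by rintro rfl; simp at hτ
  simpa [two_ne_zero, hτ0, sub_eq_zero] using h1

end Sandwich

theorem DualNumber.inl_mul_mul_inl_eq_zero_iff {A : Type*} [Ring A] {a b : A} {x : A[ε]} :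
    inl a * x * inl b = 0 ↔ a * x.fst * b = 0 ∧ a * x.snd * b = 0 := by
  simp [TrivSqZeroExt.ext_iff]

section DualQuaternion

local notation "𝐢" => quat (0 : ℂ) 1 0 0
local notation "𝐤" => quat (0 : ℂ) 0 0 1

theorem cs_eq_inl (a : ℂ) : cs a = inl (a : ℍ[ℂ]) := rfl
theorem qi_eq_inl : qi = inl 𝐢 := rfl
theorem qk_eq_inl : qk = inl 𝐤 := rfl

theorem cs_sub_qi (t : ℂ) : cs t - qi = inl (t - 𝐢) := by
  rw [cs_eq_inl, qi_eq_inl, inl_sub]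

theorem fst_g (s w d : ℝ) : (g s w d).fst = quat (w : ℂ) 0 0 (-1) := by
  ext <;> simp [g, cs_eq_inl, qi_eq_inl, qk_eq_inl]

theorem snd_g (s w d : ℝ) :
    (g s w d).snd = quat (-(d / 2 : ℂ)) (-(s * w / 2 : ℂ)) (-(s / 2 : ℂ)) (-(d * w / 2 : ℂ)) := by
  ext <;> simp [g, cs_eq_inl, qi_eq_inl, qk_eq_inl] <;> ring

variable {s₁ w₁ d₁ s₂ w₂ d₂ : ℝ} {t τ : ℂ}

theorem fst_g_mul_g : (g s₁ w₁ d₁ * (cs t - qi) * g s₂ w₂ d₂).fst =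
    quat (t * (w₁ * w₂ - 1)) (-(w₁ * w₂ + 1)) (w₂ - w₁) (-t * (w₁ + w₂)) := by
  ext <;> simp [cs_sub_qi, fst_g] <;> ring

theorem snd_g_mul_g : (g s₁ w₁ d₁ * (cs t - qi) * g s₂ w₂ d₂).snd =
    quat (((s₂ - s₁) - (s₁ + s₂) * w₁ * w₂ - t * (w₁ + w₂) * (d₁ + d₂)) / 2)
      (((w₁ - w₂) * (d₂ - d₁) + t * (s₁ - s₂ - (s₁ + s₂) * w₁ * w₂)) / 2)
      (((d₁ - d₂) * (1 + w₁ * w₂) + t * (s₂ * (w₂ - w₁) - s₁ * (w₁ + w₂))) / 2)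
      ((s₂ * (w₁ + w₂) + s₁ * (w₁ - w₂) + t * (d₁ + d₂) * (1 - w₁ * w₂)) / 2) := by
  ext <;> simp [cs_sub_qi, fst_g, snd_g] <;> ring

theorem bond_relation_same_sign (hτ : τ ^ 2 = -1)
    (h : (cs τ - qi) * (g s₁ w₁ d₁ * (cs t - qi) * g s₂ w₂ d₂) * (cs τ - qi) = 0) :
    ((2 * s₂ * w₁ * w₂ : ℝ) : ℂ) +
      τ * ((w₂ * d₁ * (w₁ ^ 2 + 1) + w₁ * d₂ * (w₂ ^ 2 + 1) : ℝ) : ℂ) = 0 := by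
  rw [cs_sub_qi τ, DualNumber.inl_mul_mul_inl_eq_zero_iff] at h
  have hP := re_eq_of_sandwich_same_sign_eq_zero hτ h.1
  have hP' := re_eq_of_sandwich_same_sign_eq_zero hτ h.2
  simp only [fst_g_mul_g, snd_g_mul_g, quat_re, quat_imI] at hP hP'
  push_cast
  -- eliminate `t`: each equation is multiplied by the `t`-coefficient of the other
  linear_combination (↑w₁ * ↑w₂ - 1) * hP'
    - (-(↑w₁ + ↑w₂) * (↑d₁ + ↑d₂) / 2 - τ * (↑s₁ - ↑s₂ - (↑s₁ + ↑s₂) * ↑w₁ * ↑w₂) / 2) * hP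
    + (↑s₂ * (1 + ↑w₁ * ↑w₂) ^ 2 - ↑s₁ * (1 - (↑w₁ * ↑w₂) ^ 2)) / 2 * hτ

theorem bond_relation_opposite_sign (hτ : τ ^ 2 = -1)
    (h : (cs τ - qi) * (g s₁ w₁ d₁ * (cs t - qi) * g s₂ w₂ d₂) * (cs (-τ) - qi) = 0) :
    ((2 * s₂ * w₁ * w₂ : ℝ) : ℂ) +
      τ * ((w₂ * d₁ * (w₁ ^ 2 + 1) - w₁ * d₂ * (w₂ ^ 2 + 1) : ℝ) : ℂ) = 0 := by
  rw [cs_sub_qi τ, cs_sub_qi (-τ), Quaternion.coe_neg,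
    DualNumber.inl_mul_mul_inl_eq_zero_iff] at h
  have hP := imJ_eq_of_sandwich_opposite_sign_eq_zero hτ h.1
  have hP' := imJ_eq_of_sandwich_opposite_sign_eq_zero hτ h.2
  simp only [fst_g_mul_g, snd_g_mul_g, quat_imJ, quat_imK] at hP hP'
  push_cast
  linear_combination τ * (↑w₁ + ↑w₂) * hP'
    - ((↑s₂ * (↑w₂ - ↑w₁) - ↑s₁ * (↑w₁ + ↑w₂)) / 2 - τ * (↑d₁ + ↑d₂) * (1 - ↑w₁ * ↑w₂) / 2) * hP
    + (↑w₁ + ↑w₂) * (↑s₂ * (↑w₁ + ↑w₂) + ↑s₁ * (↑w₁ - ↑w₂)) / 2 * hτ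

end DualQuaternion

theorem Complex.ofReal_add_mul_ofReal_eq_zero {a b : ℝ} {τ : ℂ} (hτ : τ.im ≠ 0)
    (h : (a : ℂ) + τ * b = 0) : a = 0 ∧ b = 0 := by
  have hb : b = 0 := by simpa [hτ] using congrArg Complex.im h
  refine ⟨?_, hb⟩
  simpa [hb] using congrArg Complex.re h

/- The Bennett ratio `d / sin φ`, written with `w = cot (φ / 2)`. -/
def bennettRatio (d w : ℝ) : ℝ := d * (w ^ 2 + 1) / (2 * w)

theorem bennettRatio_eq_of {d₁ w₁ d₂ w₂ : ℝ} (hw₁ : w₁ ≠ 0) (hw₂ : w₂ ≠ 0)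
    (h : w₂ * d₁ * (w₁ ^ 2 + 1) - w₁ * d₂ * (w₂ ^ 2 + 1) = 0) :
    bennettRatio d₁ w₁ = bennettRatio d₂ w₂ := by
  rw [bennettRatio, bennettRatio, div_eq_div_iff (mul_ne_zero two_ne_zero hw₁)
    (mul_ne_zero two_ne_zero hw₂)]
  linear_combination 2 * h

theorem bennettRatio_eq_neg_of {d₁ w₁ d₂ w₂ : ℝ} (hw₁ : w₁ ≠ 0) (hw₂ : w₂ ≠ 0)
    (h : w₂ * d₁ * (w₁ ^ 2 + 1) + w₁ * d₂ * (w₂ ^ 2 + 1) = 0) :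
    bennettRatio d₁ w₁ = -bennettRatio d₂ w₂ := by
  rw [bennettRatio, bennettRatio, ← neg_div, div_eq_div_iff (mul_ne_zero two_ne_zero hw₁)
    (mul_ne_zero two_ne_zero hw₂)]
  linear_combination 2 * h

theorem near_connection_implies_bennett_general
    (s₁ s₂ w₁ w₂ d₁ d₂ : ℝ) (hw₁ : w₁ ≠ 0) (hw₂ : w₂ ≠ 0)
    (t₁ t₂ t₃ : ℂ)
    (ht₁ : t₁ = Complex.I ∨ t₁ = -Complex.I)
    (ht₃ : t₃ = Complex.I ∨ t₃ = -Complex.I)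
    (hbond : (cs t₁ - qi) * g s₁ w₁ d₁ * (cs t₂ - qi) * g s₂ w₂ d₂ * (cs t₃ - qi) = 0) :
    s₂ = 0 ∧ (d₁ * (w₁^2 + 1) / (2 * w₁) = d₂ * (w₂^2 + 1) / (2 * w₂) ∨
              d₁ * (w₁^2 + 1) / (2 * w₁) = -(d₂ * (w₂^2 + 1) / (2 * w₂))) := by
  have ht₁_sq : t₁ ^ 2 = -1 := by rcases ht₁ with rfl | rfl <;> simp
  have ht₁_im : t₁.im ≠ 0 := by rcases ht₁ with rfl | rfl <;> simp
  have ht₁₃ : t₃ = t₁ ∨ t₃ = -t₁ := by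
    rcases ht₁ with rfl | rfl <;> rcases ht₃ with rfl | rfl <;> simp
  have hs₂ : 2 * s₂ * w₁ * w₂ = 0 → s₂ = 0 := by simp [hw₁, hw₂]
  rcases ht₁₃ with rfl | rfl
  · obtain ⟨hs, hb⟩ := Complex.ofReal_add_mul_ofReal_eq_zero ht₁_im
      (bond_relation_same_sign ht₁_sq (by simpa only [mul_assoc] using hbond))
    exact ⟨hs₂ hs, Or.inr (bennettRatio_eq_neg_of hw₁ hw₂ hb)⟩
  · obtain ⟨hs, hb⟩ := Complex.ofReal_add_mul_ofReal_eq_zero ht₁_im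
      (bond_relation_opposite_sign ht₁_sq (by simpa only [mul_assoc] using hbond))
    exact ⟨hs₂ hs, Or.inl (bennettRatio_eq_of hw₁ hw₂ hb)⟩

/-- A near connection (a bond with `t₁, t₃ = ±I`) implies the Bennett conditions
`s₂ = 0` and `b₁ = ±b₂` where `bᵢ = dᵢ(wᵢ² + 1)/(2wᵢ)`. -/
theorem near_connection_implies_bennett
    (s₁ s₂ w₁ w₂ d₁ d₂ : ℝ) (hw₁ : w₁ ≠ 0) (hw₂ : w₂ ≠ 0)
    (t₁ t₂ t₃ : ℂ)
    (ht₁ : t₁ = Complex.I ∨ t₁ = -Complex.I)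
    (ht₃ : t₃ = Complex.I ∨ t₃ = -Complex.I)
    (ht₂ : t₂ ≠ Complex.I ∧ t₂ ≠ -Complex.I)
    (hbond : (cs t₁ - qi) * g s₁ w₁ d₁ * (cs t₂ - qi) * g s₂ w₂ d₂ * (cs t₃ - qi) = 0) :
    s₂ = 0 ∧ (d₁ * (w₁^2 + 1) / (2 * w₁) = d₂ * (w₂^2 + 1) / (2 * w₂) ∨
              d₁ * (w₁^2 + 1) / (2 * w₁) = -(d₂ * (w₂^2 + 1) / (2 * w₂))) :=
  near_connection_implies_bennett_general s₁ s₂ w₁ w₂ d₁ d₂ hw₁ hw₂ t₁ t₂ t₃ ht₁ ht₃ hbond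
end
end
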